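/- In a connected graph G with base vertex v₀ in which the clusters form a tree, for every vertex v at distance k≥1 from v₀, all shortest paths from v₀ to v intersect every cluster on the unique cluster-tree path from the cluster of v₀ to the cluster of v. -/

import Mathlib

/-- The sphere of radius `k` around `v₀`. -/
def sphere {V : Type*} (G : SimpleGraph V) (v₀ : V) (k : ℕ) : Set V :=
  {v : V | G.dist v₀ v = k}

/-- A cluster: a connected component of the subgraph induced on some sphere around `v₀`. -/
def Cluster {V : Type*} (G : SimpleGraph V) (v₀ : V) : Type _ :=
  Σ k : ℕ, (G.induce (sphere G v₀ k)).ConnectedComponent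

/-- Membership of a vertex in a cluster. -/
def memCluster {V : Type*} (G : SimpleGraph V) (v₀ : V) (v : V)
    (C : Cluster G v₀) : Prop :=
  ∃ hv : v ∈ sphere G v₀ C.1,
    (G.induce (sphere G v₀ C.1)).connectedComponentMk ⟨v, hv⟩ = C.2

/-- The graph of clusters: clusters are vertices, two distinct clusters being adjacent
whenever they contain adjacent vertices of `G`. -/
def clusterGraph {V : Type*} (G : SimpleGraph V) (v₀ : V) :
    SimpleGraph (Cluster G v₀) where
  Adj C C' := C ≠ C' ∧ ∃ u w : V, G.Adj u w ∧ memCluster G v₀ u C ∧ memCluster G v₀ w C'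
  symm := ⟨by
    rintro C C' ⟨hne, u, w, hadj, hu, hw⟩
    exact ⟨Ne.symm hne, w, u, hadj.symm, hw, hu⟩⟩
  loopless := ⟨by rintro C ⟨hne, -⟩; exact hne rfl⟩

/-- The cluster of a given vertex. -/
noncomputable def clusterOf {V : Type*} (G : SimpleGraph V) (v₀ v : V) : Cluster G v₀ :=
  ⟨G.dist v₀ v, (G.induce (sphere G v₀ (G.dist v₀ v))).connectedComponentMk ⟨v, rfl⟩⟩

/-!
Every edge of `G` either stays inside one cluster or joins two adjacent clusters, so any walk
from `v₀` to `v` projects to a walk in the cluster graph that only visits clusters the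
original walk meets. In a tree the unique path between two vertices is contained
in every walk between them, in particular in this projected walk.
-/

namespace SimpleGraph

variable {V W : Type*} {G : SimpleGraph V} {H : SimpleGraph W}

theorem Walk.exists_walk_support_subset_map (f : V → W)
    (hf : ∀ ⦃u w : V⦄, G.Adj u w → f u = f w ∨ H.Adj (f u) (f w)) {u v : V} (p : G.Walk u v) :
    ∃ Q : H.Walk (f u) (f v), Q.support ⊆ p.support.map f := by
  induction p with
  | nil => exact ⟨nil, by simp⟩
  | cons h p ih =>
    obtain ⟨Q, hQ⟩ := ih
    rcases hf h with heq | hadj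
    · refine ⟨Q.copy heq.symm rfl, ?_⟩
      rw [Walk.support_copy, Walk.support_cons, List.map_cons]
      exact fun _ hx => List.mem_cons_of_mem _ (hQ hx)
    · refine ⟨cons hadj Q, ?_⟩
      rw [Walk.support_cons, Walk.support_cons, List.map_cons]
      exact List.cons_subset_cons _ hQ

theorem IsAcyclic.support_subset_of_isPath (hG : G.IsAcyclic) {u v : V} {q : G.Walk u v}
    (hq : q.IsPath) (p : G.Walk u v) : q.support ⊆ p.support := by
  classical
  have hq_eq : (⟨q, hq⟩ : G.Path u v) = ⟨p.bypass, p.bypass_isPath⟩ :=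
    (hG.subsingleton_path u v).elim _ _
  rw [show q = p.bypass from congrArg Subtype.val hq_eq]
  exact p.support_bypass_subset_support

end SimpleGraph

section Clusters

variable {V : Type*} (G : SimpleGraph V) (v₀ : V)

theorem memCluster_clusterOf (v : V) : memCluster G v₀ v (clusterOf G v₀ v) := ⟨rfl, rfl⟩

theorem clusterOf_eq_or_adj ⦃u w : V⦄ (h : G.Adj u w) :
    clusterOf G v₀ u = clusterOf G v₀ w ∨
      (clusterGraph G v₀).Adj (clusterOf G v₀ u) (clusterOf G v₀ w) :=
  or_iff_not_imp_left.2 fun hne =>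
    ⟨hne, u, w, h, memCluster_clusterOf G v₀ u, memCluster_clusterOf G v₀ w⟩

end Clusters

theorem stmt17_general {V : Type*} (G : SimpleGraph V) (v₀ : V)
    (htree : (clusterGraph G v₀).IsTree) :
    ∀ (v : V) (k : ℕ), G.dist v₀ v = k → 1 ≤ k →
      ∀ p : G.Walk v₀ v, p.length = k →
        ∀ q : (clusterGraph G v₀).Walk (clusterOf G v₀ v₀) (clusterOf G v₀ v),
          q.IsPath → ∀ C ∈ q.support, ∃ w ∈ p.support, memCluster G v₀ w C := by
  intro v _ _ _ p _ q hq C hC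
  obtain ⟨Q, hQ⟩ := p.exists_walk_support_subset_map (clusterOf G v₀) (clusterOf_eq_or_adj G v₀)
  obtain ⟨w, hw, rfl⟩ := List.mem_map.1 (hQ (htree.isAcyclic.support_subset_of_isPath hq Q hC))
  exact ⟨w, hw, memCluster_clusterOf G v₀ w⟩

/-- If the clusters form a tree, every shortest path from `v₀` to `v` meets every cluster
on the (unique) cluster-tree path from the cluster of `v₀` to the cluster of `v`. -/
theorem stmt17 {V : Type*} (G : SimpleGraph V) (v₀ : V) (hconn : G.Connected)
    (htree : (clusterGraph G v₀).IsTree) :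
    ∀ (v : V) (k : ℕ), G.dist v₀ v = k → 1 ≤ k →
      ∀ p : G.Walk v₀ v, p.length = k →
        ∀ q : (clusterGraph G v₀).Walk (clusterOf G v₀ v₀) (clusterOf G v₀ v),
          q.IsPath → ∀ C ∈ q.support, ∃ w ∈ p.support, memCluster G v₀ w C :=
  stmt17_general G v₀ htree
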